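/- Let c1 > 0 and c2 > 0 and consider the two-player game Γ_2^c in which player 1 has actions {a1,a2,a3}, player 2 has actions {b1,b2,b3}, and payoffs (u_1,u_2) are: (a1,b1)↦(1,1), (a1,b2)↦(0,0), (a1,b3)↦(−7−c1,−7−c2), (a2,b1)↦(0,0), (a2,b2)↦(0,0), (a2,b3)↦(−7,−7), (a3,b1)↦(−7−c1,−7−c2), (a3,b2)↦(−7,−7), (a3,b3)↦(−7,−7). Then the set of proper equilibria of Γ_2^c equals {(a1,b1)}. -/

import Mathlib

open Filter Topology

section GameDefs

variable {N : Type} [Fintype N] [DecidableEq N] {A : N → Type}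
  [∀ i, Fintype (A i)] [∀ i, DecidableEq (A i)]

/-- A mixed-strategy profile: each `σ i` is a probability distribution on `A i`. -/
def IsStrategy (σ : ∀ i, A i → ℝ) : Prop :=
  (∀ i a, 0 ≤ σ i a) ∧ ∀ i, ∑ a, σ i a = 1

/-- An interior profile places positive probability on every action. -/
def Interior (σ : ∀ i, A i → ℝ) : Prop :=
  ∀ i a, 0 < σ i a

/-- Expected utility of player `i` at profile `σ`. -/
noncomputable def expUtil (u : ∀ i : N, (∀ j, A j) → ℝ) (σ : ∀ i, A i → ℝ) (i : N) : ℝ :=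
  ∑ a : ∀ j, A j, u i a * ∏ j, σ j (a j)

/-- Expected utility of player `i` from playing action `ai` against `σ₋ᵢ`. -/
noncomputable def devUtil (u : ∀ i : N, (∀ j, A j) → ℝ) (σ : ∀ i, A i → ℝ)
    (i : N) (ai : A i) : ℝ :=
  expUtil u (Function.update σ i (fun b => if b = ai then (1 : ℝ) else 0)) i

/-- Nash equilibrium. -/
def IsNash (u : ∀ i : N, (∀ j, A j) → ℝ) (σ : ∀ i, A i → ℝ) : Prop :=
  IsStrategy σ ∧ ∀ (i : N) (μ : A i → ℝ), (∀ a, 0 ≤ μ a) → (∑ a, μ a = 1) →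
    expUtil u (Function.update σ i μ) i ≤ expUtil u σ i

/-- Weak payoff monotonicity: differences in behavior reveal differences in payoffs. -/
def WeaklyPayoffMonotone (u : ∀ i : N, (∀ j, A j) → ℝ) (σ : ∀ i, A i → ℝ) : Prop :=
  IsStrategy σ ∧ ∀ (i : N) (ai bi : A i), σ i bi < σ i ai →
    devUtil u σ i bi < devUtil u σ i ai

/-- Payoff monotonicity. -/
def PayoffMonotone (u : ∀ i : N, (∀ j, A j) → ℝ) (σ : ∀ i, A i → ℝ) : Prop :=
  IsStrategy σ ∧ ∀ (i : N) (ai bi : A i),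
    σ i bi ≤ σ i ai ↔ devUtil u σ i bi ≤ devUtil u σ i ai

/-- Pointwise convergence of a sequence of profiles. -/
def ConvergesTo (s : ℕ → ∀ i, A i → ℝ) (σ : ∀ i, A i → ℝ) : Prop :=
  ∀ (i : N) (ai : A i), Tendsto (fun n => s n i ai) atTop (𝓝 (σ i ai))

/-- Empirical equilibrium: a Nash equilibrium that is the limit of weakly payoff
monotone profiles. -/
def IsEmpirical (u : ∀ i : N, (∀ j, A j) → ℝ) (σ : ∀ i, A i → ℝ) : Prop :=
  IsNash u σ ∧ ∃ s : ℕ → ∀ i, A i → ℝ,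
    (∀ n, WeaklyPayoffMonotone u (s n)) ∧ ConvergesTo s σ

/-- Proper equilibrium (Myerson). -/
def IsProper (u : ∀ i : N, (∀ j, A j) → ℝ) (σ : ∀ i, A i → ℝ) : Prop :=
  IsStrategy σ ∧ ∃ s : ℕ → ∀ i, A i → ℝ,
    (∀ n, IsStrategy (s n) ∧ Interior (s n) ∧
      ∀ (i : N) (ai bi : A i),
        devUtil u (s n) i bi < devUtil u (s n) i ai →
          s n i bi ≤ (1 / (n + 1) : ℝ) * s n i ai) ∧
    ConvergesTo s σ

/-- Perfect equilibrium (Selten, in Myerson's formulation). -/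
def IsPerfect (u : ∀ i : N, (∀ j, A j) → ℝ) (σ : ∀ i, A i → ℝ) : Prop :=
  IsStrategy σ ∧ ∃ s : ℕ → ∀ i, A i → ℝ,
    (∀ n, IsStrategy (s n) ∧ Interior (s n) ∧
      ∀ (i : N) (ai : A i), (1 / (n + 1) : ℝ) < s n i ai →
        ∀ bi : A i, devUtil u (s n) i bi ≤ devUtil u (s n) i ai) ∧
    ConvergesTo s σ

/-- `bi` weakly dominates `ai` for player `i`. -/
def WeaklyDominates (u : ∀ i : N, (∀ j, A j) → ℝ) (i : N) (bi ai : A i) : Prop :=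
  (∀ a : ∀ j, A j, u i (Function.update a i ai) ≤ u i (Function.update a i bi)) ∧
  ∃ a : ∀ j, A j, u i (Function.update a i ai) < u i (Function.update a i bi)

/-- Undominated Nash equilibrium. -/
def IsUndominatedNash (u : ∀ i : N, (∀ j, A j) → ℝ) (σ : ∀ i, A i → ℝ) : Prop :=
  IsNash u σ ∧ ∀ (i : N) (ai : A i), 0 < σ i ai →
    ¬ ∃ bi : A i, WeaklyDominates u i bi ai

end GameDefs

/-- A regular quantal response function on a finite set of actions `B`:
interiority, continuity, responsiveness, and monotonicity. -/
def IsRegularQRF {B : Type} [Fintype B] [DecidableEq B]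
    (p : (B → ℝ) → (B → ℝ)) : Prop :=
  (∀ x, (∀ a, 0 < p x a) ∧ ∑ a, p x a = 1) ∧
  Continuous p ∧
  (∀ (x : B → ℝ) (η : ℝ) (a : B), 0 < η →
    p x a < p (Function.update x a (x a + η)) a) ∧
  ∀ (x : B → ℝ) (a b : B), x b < x a → p x b < p x a

section QREDefs

variable {N : Type} [Fintype N] [DecidableEq N] {A : N → Type}
  [∀ i, Fintype (A i)] [∀ i, DecidableEq (A i)]

/-- Quantal response equilibrium with respect to a profile of QRFs `p`. -/
def IsQRE (u : ∀ i : N, (∀ j, A j) → ℝ) (p : ∀ i, (A i → ℝ) → (A i → ℝ))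
    (σ : ∀ i, A i → ℝ) : Prop :=
  ∀ i : N, σ i = p i (fun ai => devUtil u σ i ai)

/-- A sequence of profiles of QRFs is utility maximizing in the limit. -/
def UtilityMaximizingInLimit (u : ∀ i : N, (∀ j, A j) → ℝ)
    (p : ℕ → ∀ i, (A i → ℝ) → (A i → ℝ)) : Prop :=
  ∀ (s : ℕ → ∀ i, A i → ℝ) (σ : ∀ i, A i → ℝ),
    (∀ n, IsQRE u (p n) (s n)) → ConvergesTo s σ → IsNash u σ

/-- `σ` is approachable by regular QRE that are utility maximizing in the limit. -/
def ApproachableByRegularQRE (u : ∀ i : N, (∀ j, A j) → ℝ) (σ : ∀ i, A i → ℝ) : Prop :=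
  ∃ p : ℕ → ∀ i, (A i → ℝ) → (A i → ℝ),
    (∀ n i, IsRegularQRF (p n i)) ∧ UtilityMaximizingInLimit u p ∧
    ∃ s : ℕ → ∀ i, A i → ℝ, (∀ n, IsQRE u (p n) (s n)) ∧ ConvergesTo s σ

end QREDefs

/-- A control cost function (van Damme), bundled with its derivative on `(0,1]`. -/
structure ControlCost where
  f : ℝ → ℝ
  f' : ℝ → ℝ
  hasDeriv : ∀ x ∈ Set.Ioc (0:ℝ) 1, HasDerivWithinAt f (f' x) (Set.Ioc (0:ℝ) 1) x
  contDeriv : ContinuousOn f' (Set.Ioc (0:ℝ) 1)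
  anti : StrictAntiOn f (Set.Ioc (0:ℝ) 1)
  convex : StrictConvexOn ℝ (Set.Ioc (0:ℝ) 1) f
  atOne : f 1 = 0
  blowup : Tendsto f (nhdsWithin 0 (Set.Ioi (0:ℝ))) atTop

/-- The game Γ₂ᶜ (Table 2). Player `0` is player 1 (actions `0 = a1`, `1 = a2`,
`2 = a3`); player `1` is player 2 (actions `0 = b1`, `1 = b2`, `2 = b3`). -/
noncomputable def uGammaC (c1 c2 : ℝ) : ∀ _ : Fin 2, (Fin 2 → Fin 3) → ℝ := fun i a =>
  if i = 0 then
    ![![(1:ℝ), 0, -7 - c1], ![0, 0, -7], ![-7 - c1, -7, -7]] (a 0) (a 1)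
  else
    ![![(1:ℝ), 0, -7 - c2], ![0, 0, -7], ![-7 - c2, -7, -7]] (a 0) (a 1)

/-!
Against an interior strategy `a3` is strictly worse than `a2`, so in an `ε`-proper profile
`x₃ ≤ ε x₂`, and likewise `y₃ ≤ ε y₂`. Once `c ε < 7` this makes `a3` worse than `a1`, so
`x₃ ≤ ε x₁` and `y₃ ≤ ε y₁`; once `c ε < 1` it then makes `a2` worse than `a1`, so `x₂ ≤ ε x₁`.
Hence an `ε`-proper profile puts mass at least `1 / (1 + 2ε)` on `a1` and on `b1`. Conversely,
both players trembling as `(1 - e - e², e, e²)`, with `e` small compared to `ε` and to `1 / c`,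
gives `ε`-proper profiles converging to `(a1, b1)`.
-/

section TwoPlayer

variable {B : Type} [Fintype B] [DecidableEq B]

theorem devUtil_fin_two_zero (u : Fin 2 → (Fin 2 → B) → ℝ) (σ : Fin 2 → B → ℝ) (a : B) :
    devUtil u σ 0 a = ∑ b, u 0 ![a, b] * σ 1 b := by
  rw [devUtil, expUtil, ← (finTwoArrowEquiv B).symm.sum_comp, Fintype.sum_prod_type]
  simp [Fin.prod_univ_two]

theorem devUtil_fin_two_one (u : Fin 2 → (Fin 2 → B) → ℝ) (σ : Fin 2 → B → ℝ) (b : B) :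
    devUtil u σ 1 b = ∑ a, u 1 ![a, b] * σ 0 a := by
  rw [devUtil, expUtil, ← (finTwoArrowEquiv B).symm.sum_comp, Fintype.sum_prod_type]
  simp [Fin.prod_univ_two]

end TwoPlayer

theorem IsStrategy.apply_le_one {N : Type} [Fintype N] {A : N → Type} [∀ i, Fintype (A i)]
    {σ : ∀ i, A i → ℝ} (hσ : IsStrategy σ) (i : N) (a : A i) : σ i a ≤ 1 :=
  hσ.2 i ▸ Finset.single_le_sum (fun b _ => hσ.1 i b) (Finset.mem_univ a)

theorem IsStrategy.eq_pi_single {N : Type} [Fintype N] {A : N → Type} [∀ i, Fintype (A i)]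
    [∀ i, DecidableEq (A i)] {σ : ∀ i, A i → ℝ} (hσ : IsStrategy σ) {i : N} {a : A i}
    (ha : σ i a = 1) : σ i = Pi.single a 1 := by
  have hrest : ∑ b ∈ Finset.univ.erase a, σ i b = 0 := by
    linarith [Finset.add_sum_erase Finset.univ (σ i) (Finset.mem_univ a), hσ.2 i]
  rw [Finset.sum_eq_zero_iff_of_nonneg fun b _ => hσ.1 i b] at hrest
  funext b
  rcases eq_or_ne b a with rfl | hb
  · simpa using ha
  · simpa [hb] using hrest b (Finset.mem_erase.mpr ⟨hb, Finset.mem_univ b⟩)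

/-- The payoffs to the three actions of a player of `Γ₂ᶜ` with parameter `c` against the mixed
strategy `y` of the other player: the game is symmetric up to exchanging `c1` and `c2`. -/
def gammaPayoff (c : ℝ) (y : Fin 3 → ℝ) : Fin 3 → ℝ :=
  ![y 0 + (-7 - c) * y 2, -7 * y 2, (-7 - c) * y 0 - 7 * y 1 - 7 * y 2]

theorem devUtil_uGammaC_zero (c1 c2 : ℝ) (σ : Fin 2 → Fin 3 → ℝ) :
    devUtil (uGammaC c1 c2) σ 0 = gammaPayoff c1 (σ 1) := by
  funext a
  rw [devUtil_fin_two_zero]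
  fin_cases a <;> simp [uGammaC, gammaPayoff, Fin.sum_univ_three, sub_eq_add_neg]

theorem devUtil_uGammaC_one (c1 c2 : ℝ) (σ : Fin 2 → Fin 3 → ℝ) :
    devUtil (uGammaC c1 c2) σ 1 = gammaPayoff c2 (σ 0) := by
  funext b
  rw [devUtil_fin_two_one]
  fin_cases b <;> simp [uGammaC, gammaPayoff, Fin.sum_univ_three, sub_eq_add_neg]

section GammaPayoff

variable {c : ℝ} {y : Fin 3 → ℝ}

theorem gammaPayoff_two_lt_one (hc : 0 ≤ c) (hy0 : 0 < y 0) (hy1 : 0 ≤ y 1) :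
    gammaPayoff c y 2 < gammaPayoff c y 1 := by
  simp only [gammaPayoff, Matrix.cons_val, Matrix.cons_val_one, Matrix.cons_val_zero]
  nlinarith

theorem gammaPayoff_two_lt_zero (hc : 0 ≤ c) (hy0 : 0 ≤ y 0) (hy : c * y 2 < 7 * y 1) :
    gammaPayoff c y 2 < gammaPayoff c y 0 := by
  simp only [gammaPayoff, Matrix.cons_val, Matrix.cons_val_zero]
  nlinarith

theorem gammaPayoff_one_lt_zero (hy : c * y 2 < y 0) :
    gammaPayoff c y 1 < gammaPayoff c y 0 := by
  simp only [gammaPayoff, Matrix.cons_val_one, Matrix.cons_val_zero]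
  linarith

end GammaPayoff

def IsProperReply (c ε : ℝ) (x y : Fin 3 → ℝ) : Prop :=
  ∀ a b, gammaPayoff c y b < gammaPayoff c y a → x b ≤ ε * x a

section ProperReply

variable {c c' ε : ℝ} {x y : Fin 3 → ℝ}

theorem IsProperReply.one_le_mul_apply_zero (hx : IsProperReply c ε x y)
    (hy : IsProperReply c' ε y x) (hc : 0 ≤ c) (hc' : 0 ≤ c') (hcε : c * ε < 1)
    (hc'ε : c' * ε < 7) (hxpos : ∀ a, 0 < x a) (hypos : ∀ a, 0 < y a) (hsum : ∑ a, x a = 1) :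
    1 ≤ (1 + 2 * ε) * x 0 := by
  have hx21 : x 2 ≤ ε * x 1 := hx 1 2 (gammaPayoff_two_lt_one hc (hypos 0) (hypos 1).le)
  have hy21 : y 2 ≤ ε * y 1 := hy 1 2 (gammaPayoff_two_lt_one hc' (hxpos 0) (hxpos 1).le)
  have hx20 : x 2 ≤ ε * x 0 :=
    hx 0 2 (gammaPayoff_two_lt_zero hc (hypos 0).le (by nlinarith [hypos 1]))
  have hy20 : y 2 ≤ ε * y 0 :=
    hy 0 2 (gammaPayoff_two_lt_zero hc' (hxpos 0).le (by nlinarith [hxpos 1]))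
  have hx10 : x 1 ≤ ε * x 0 := hx 0 1 (gammaPayoff_one_lt_zero (by nlinarith [hypos 0]))
  rw [Fin.sum_univ_three] at hsum
  linarith

end ProperReply

theorem isProperReply_of_strictAnti {c ε : ℝ} {x y : Fin 3 → ℝ}
    (hy : StrictAnti (gammaPayoff c y)) (hx : ∀ a b, a < b → x b ≤ ε * x a) :
    IsProperReply c ε x y :=
  fun a b h => hx a b (hy.lt_iff_gt.mp h)

def tremble (e : ℝ) : Fin 3 → ℝ := ![1 - e - e ^ 2, e, e ^ 2]

theorem tremble_zero : tremble 0 = Pi.single 0 1 := by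
  funext a
  fin_cases a <;> simp [tremble]

theorem continuous_tremble : Continuous tremble := by
  unfold tremble
  fun_prop

theorem sum_tremble (e : ℝ) : ∑ a, tremble e a = 1 := by
  simp only [tremble, Fin.sum_univ_three, Matrix.cons_val, Matrix.cons_val_one,
    Matrix.cons_val_zero]
  ring

section Tremble

variable {e : ℝ}

theorem tremble_pos (he : 0 < e) (he1 : e ≤ 1 / 2) (a : Fin 3) : 0 < tremble e a := by
  fin_cases a
  · show 0 < 1 - e - e ^ 2
    nlinarith
  · exact he
  · exact pow_pos he 2

theorem isProperReply_tremble {c ε : ℝ} (hc : 0 ≤ c) (he : 0 < e) (he1 : e ≤ 1 / 4)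
    (hce : c * e ≤ 1 / 4) (heε : 4 * e ≤ ε) :
    IsProperReply c ε (tremble e) (tremble e) := by
  have hmain : 1 / 2 ≤ 1 - e - e ^ 2 := by nlinarith
  refine isProperReply_of_strictAnti ?_ ?_
  · refine Fin.strictAnti_iff_succ_lt.mpr fun i => ?_
    fin_cases i
    · exact gammaPayoff_one_lt_zero (show c * e ^ 2 < 1 - e - e ^ 2 by nlinarith)
    · exact gammaPayoff_two_lt_one hc (show 0 < 1 - e - e ^ 2 by linarith) he.le
  · intro a b hab
    fin_cases a <;> fin_cases b <;> simp [tremble] at hab ⊢ <;> nlinarith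

end Tremble

section Proper

variable {c1 c2 : ℝ}

theorem apply_zero_eq_one_of_isProper_uGammaC (hc1 : 0 ≤ c1) (hc2 : 0 ≤ c2)
    {σ : Fin 2 → Fin 3 → ℝ} (hσ : IsProper (uGammaC c1 c2) σ) (i : Fin 2) : σ i 0 = 1 := by
  obtain ⟨hσ, s, hs, hlim⟩ := hσ
  set ε : ℕ → ℝ := fun n => 1 / ((n : ℝ) + 1)
  have hε : Tendsto ε atTop (𝓝 0) := tendsto_one_div_add_atTop_nhds_zero_nat
  have hsmall (c : ℝ) : ∀ᶠ n in atTop, c * ε n < 1 := by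
    have hcε := hε.const_mul c
    rw [mul_zero] at hcε
    exact hcε.eventually_lt_const one_pos
  have hbound : ∀ᶠ n in atTop, 1 ≤ (1 + 2 * ε n) * s n i 0 := by
    filter_upwards [hsmall c1, hsmall c2] with n h1 h2
    obtain ⟨hstrat, hint, hprop⟩ := hs n
    have hx : IsProperReply c1 (ε n) (s n 0) (s n 1) := fun a b h =>
      hprop 0 a b (by rwa [devUtil_uGammaC_zero])
    have hy : IsProperReply c2 (ε n) (s n 1) (s n 0) := fun a b h =>
      hprop 1 a b (by rwa [devUtil_uGammaC_one])
    fin_cases i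
    · exact hx.one_le_mul_apply_zero hy hc1 hc2 h1 (by linarith) (hint 0) (hint 1) (hstrat.2 0)
    · exact hy.one_le_mul_apply_zero hx hc2 hc1 h2 (by linarith) (hint 1) (hint 0) (hstrat.2 1)
  have hlim' : Tendsto (fun n => (1 + 2 * ε n) * s n i 0) atTop (𝓝 ((1 + 2 * 0) * σ i 0)) :=
    ((hε.const_mul 2).const_add 1).mul (hlim i 0)
  exact le_antisymm (hσ.apply_le_one i 0) (by simpa using ge_of_tendsto hlim' hbound)

theorem isProper_uGammaC_tremble_zero (hc1 : 0 ≤ c1) (hc2 : 0 ≤ c2) :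
    IsProper (uGammaC c1 c2) fun _ => tremble 0 := by
  set K := 4 * (1 + c1 + c2)
  have hK : 4 ≤ K := by linarith
  set e : ℕ → ℝ := fun n => 1 / ((n : ℝ) + 1) / K
  refine ⟨⟨fun _ a => ?_, fun _ => sum_tremble 0⟩, fun n _ => tremble (e n), fun n => ?_, ?_⟩
  · fin_cases a <;> simp [tremble]
  · have hε : 1 / ((n : ℝ) + 1) ≤ 1 := by
      rw [div_le_one (by positivity)]
      linarith [n.cast_nonneg (α := ℝ)]
    have he : 0 < e n := by positivity
    have heK : e n * K = 1 / ((n : ℝ) + 1) := div_mul_cancel₀ _ (by positivity)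
    have he4 : e n ≤ 1 / 4 := by nlinarith
    have hreply (c : ℝ) (hc : 0 ≤ c) (hcK : 4 * c ≤ K) :
        IsProperReply c (1 / ((n : ℝ) + 1)) (tremble (e n)) (tremble (e n)) :=
      isProperReply_tremble hc he he4 (by nlinarith) (by nlinarith)
    refine ⟨⟨fun _ a => (tremble_pos he (by linarith) a).le, fun _ => sum_tremble _⟩,
      fun _ => tremble_pos he (by linarith), Fin.forall_fin_two.mpr ⟨?_, ?_⟩⟩
    · exact fun a b h => hreply c1 hc1 (by linarith) a b (by rwa [devUtil_uGammaC_zero] at h)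
    · exact fun a b h => hreply c2 hc2 (by linarith) a b (by rwa [devUtil_uGammaC_one] at h)
  · have he : Tendsto e atTop (𝓝 0) := by
      simpa [e] using tendsto_one_div_add_atTop_nhds_zero_nat.div_const K
    intro i a
    exact ((continuous_apply a).comp continuous_tremble).tendsto 0 |>.comp he

end Proper

theorem gammaC_proper_set (c1 c2 : ℝ) (hc1 : 0 < c1) (hc2 : 0 < c2)
    (σ : ∀ _ : Fin 2, Fin 3 → ℝ) (hσ : IsStrategy σ) :
    IsProper (uGammaC c1 c2) σ ↔ (σ 0 0 = 1 ∧ σ 1 0 = 1) := by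
  refine ⟨fun h => ⟨apply_zero_eq_one_of_isProper_uGammaC hc1.le hc2.le h 0,
    apply_zero_eq_one_of_isProper_uGammaC hc1.le hc2.le h 1⟩, fun ⟨h0, h1⟩ => ?_⟩
  have hpure : σ = fun _ => tremble 0 := by
    funext i
    rw [tremble_zero]
    fin_cases i
    · exact hσ.eq_pi_single h0
    · exact hσ.eq_pi_single h1
  rw [hpure]
  exact isProper_uGammaC_tremble_zero hc1.le hc2.le
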